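/- For every propositional base K, if M is a minimal inconsistent subset (MIS) of K, then M is an O-MIS of K, i.e., there exists a Minimal Inconsistency Relation ∼ of K such that M = form_mir(∼). -/

import Mathlib

namespace Occ

/-- Propositional formulas over variables indexed by `ℕ`,
built from variables using negation and conjunction. -/
inductive Form : Type where
  | var : ℕ → Form
  | neg : Form → Form
  | conj : Form → Form → Form
deriving DecidableEq

/-- Boolean evaluation of a formula under an interpretation `w`. -/
def eval (w : ℕ → Bool) : Form → Bool
  | .var p => w p
  | .neg φ => !(eval w φ)
  | .conj φ ψ => eval w φ && eval w ψ

/-- The variables occurring in a formula. -/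
def vars : Form → Finset ℕ
  | .var p => {p}
  | .neg φ => vars φ
  | .conj φ ψ => vars φ ∪ vars ψ

/-- A step in a path addressing a subformula occurrence. -/
inductive Step : Type where
  | neg | left | right
deriving DecidableEq

/-- `occAt φ l pol = some (p, pol')` iff the path `l` addresses an occurrence of the
variable `p` in `φ`, and this occurrence has polarity `pol'` (`true` = positive)
when the ambient polarity of `φ` is `pol`. -/
def occAt : Form → List Step → Bool → Option (ℕ × Bool)
  | .var p, [], pol => some (p, pol)
  | .neg φ, .neg :: l, pol => occAt φ l (!pol)
  | .conj φ _, .left :: l, pol => occAt φ l pol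
  | .conj _ ψ, .right :: l, pol => occAt ψ l pol
  | _, _, _ => none

/-- A variable occurrence in a base: a formula together with a path into it. -/
abbrev Occurrence : Type := Form × List Step

/-- A propositional base: a finite set of formulas. -/
abbrev PB : Type := Finset Form

/-- `o` is a variable occurrence in the base `K`. -/
def IsOcc (K : PB) (o : Occurrence) : Prop :=
  o.1 ∈ K ∧ ∃ p pol, occAt o.1 o.2 true = some (p, pol)

/-- `o` is an occurrence of the variable `p` in `K`, of polarity `pol`. -/
def IsOccOf (K : PB) (o : Occurrence) (p : ℕ) (pol : Bool) : Prop :=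
  o.1 ∈ K ∧ occAt o.1 o.2 true = some (p, pol)

/-- `o` is an occurrence of the variable `p` in `K`. -/
def IsOccVar (K : PB) (o : Occurrence) (p : ℕ) : Prop :=
  ∃ pol, IsOccOf K o p pol

/-- `o` is a positive variable occurrence in `K`. -/
def IsPosOcc (K : PB) (o : Occurrence) : Prop := ∃ p, IsOccOf K o p true

/-- `o` is a negative variable occurrence in `K`. -/
def IsNegOcc (K : PB) (o : Occurrence) : Prop := ∃ p, IsOccOf K o p false

/-- `o` and `o'` are occurrences of the same variable. -/
def sameVar (o o' : Occurrence) : Prop :=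
  ∃ p pol pol', occAt o.1 o.2 true = some (p, pol) ∧ occAt o'.1 o'.2 true = some (p, pol')

/-- The variables occurring in a base. -/
def varsPB (K : PB) : Finset ℕ := K.sup vars

/-- `w` is a (Boolean) model of the base `K` (i.e. of the conjunction of its formulas). -/
def modelsPB (w : ℕ → Bool) (K : PB) : Prop := ∀ φ ∈ K, eval w φ = true

/-- A base is consistent iff the conjunction of its formulas has a model. -/
def ConsistentPB (K : PB) : Prop := ∃ w, modelsPB w K

/-- Classical entailment from a base. -/
def Entails (K : PB) (φ : Form) : Prop := ∀ w, modelsPB w K → eval w φ = true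

/-- Rename every variable occurrence of a formula, the new variable of the
occurrence at path `l` being `f l`. -/
def renameBy : (List Step → ℕ) → Form → Form
  | f, .var _ => .var (f [])
  | f, .neg φ => .neg (renameBy (fun l => f (.neg :: l)) φ)
  | f, .conj φ ψ =>
      .conj (renameBy (fun l => f (.left :: l)) φ) (renameBy (fun l => f (.right :: l)) ψ)

/-- The formula `φ` (viewed as a member of a base) with each occurrence `o`
replaced by the variable `R o`. -/
def renameForm (R : Occurrence → ℕ) (φ : Form) : Form :=
  renameBy (fun l => R (φ, l)) φ

/-- A C-renaming of `K`: it assigns a pairwise distinct fresh variable to each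
occurrence of `K`. -/
structure IsCRenaming (K : PB) (R : Occurrence → ℕ) : Prop where
  fresh : ∀ o, IsOcc K o → R o ∉ varsPB K
  inj : ∀ o o', IsOcc K o → IsOcc K o' → R o = R o' → o = o'

/-- Binary relations on occurrences, viewed as sets of ordered pairs. -/
abbrev Rel : Type := Set (Occurrence × Occurrence)

/-- `r` is an equivalence relation on `Occ(K)`. -/
structure IsEquivOn (K : PB) (r : Rel) : Prop where
  dom : ∀ q ∈ r, IsOcc K q.1 ∧ IsOcc K q.2
  refl : ∀ o, IsOcc K o → (o, o) ∈ r
  symm : ∀ q ∈ r, (q.2, q.1) ∈ r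
  trans : ∀ a b c : Occurrence, (a, b) ∈ r → (b, c) ∈ r → (a, c) ∈ r

/-- Compliance: related occurrences are occurrences of the same variable. -/
def Compliant (r : Rel) : Prop := ∀ q ∈ r, sameVar q.1 q.2

/-- Consistency of the formula `⋀R(K) ∧ ⋀_{(o,o')∈r} (R(o) ↔ R(o'))`. -/
def RelConsistent (K : PB) (R : Occurrence → ℕ) (r : Rel) : Prop :=
  ∃ w : ℕ → Bool, (∀ φ ∈ K, eval w (renameForm R φ) = true) ∧
    ∀ q ∈ r, w (R q.1) = w (R q.2)

/-- Minimal Inconsistency Relation of `K` (w.r.t. the C-renaming `R`). -/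
def IsMIR (K : PB) (R : Occurrence → ℕ) (r : Rel) : Prop :=
  IsEquivOn K r ∧ Compliant r ∧ ¬ RelConsistent K R r ∧
    ∀ r', IsEquivOn K r' → Compliant r' → ¬ RelConsistent K R r' → ¬ r' ⊂ r

/-- Maximal Consistency Relation of `K` (w.r.t. the C-renaming `R`). -/
def IsMCR (K : PB) (R : Occurrence → ℕ) (r : Rel) : Prop :=
  IsEquivOn K r ∧ Compliant r ∧ RelConsistent K R r ∧
    ∀ r', IsEquivOn K r' → Compliant r' → RelConsistent K R r' → ¬ r ⊂ r'

/-- The relation `∼_c^K`: relating occurrences of `K` of the same variable. -/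
def sameVarRel (K : PB) : Rel :=
  {q | IsOcc K q.1 ∧ IsOcc K q.2 ∧ sameVar q.1 q.2}

/-- `PN(r)`: related pairs consisting of a positive and a negative occurrence. -/
def PN (K : PB) (r : Rel) : Rel :=
  {q | q ∈ r ∧ IsPosOcc K q.1 ∧ IsNegOcc K q.2}

/-- A BMCR: an MCR satisfying Maximality-2. -/
def IsBMCR (K : PB) (R : Occurrence → ℕ) (r : Rel) : Prop :=
  IsMCR K R r ∧
    ∀ r', IsEquivOn K r' → Compliant r' → RelConsistent K R r' → ¬ PN K r ⊂ PN K r'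

/-- `H` is a hitting set of the collection `S`. -/
def IsHittingSet {α : Type} (S : Set (Set α)) (H : Set α) : Prop :=
  ∀ s ∈ S, (s ∩ H).Nonempty

/-- `H` is a minimal hitting set of the collection `S`. -/
def IsMinHittingSet {α : Type} (S : Set (Set α)) (H : Set α) : Prop :=
  IsHittingSet S H ∧ ∀ H', H' ⊂ H → ¬ IsHittingSet S H'

/-- `r` is `H`-maximal (for an equivalence relation `r ⊆ ∼_c^K`). -/
def IsHMaximal (K : PB) (H r : Rel) : Prop :=
  r ∩ H = ∅ ∧
    ∀ r', IsEquivOn K r' → r' ⊆ sameVarRel K → r ⊂ r' → (r' ∩ H).Nonempty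

/-- `r` is `H`-minimal (for an equivalence relation `r ⊆ ∼_c^K`). -/
def IsHMinimal (K : PB) (H r : Rel) : Prop :=
  H ⊆ r ∧ ∀ r', IsEquivOn K r' → r' ⊂ r → ¬ H ⊆ r'

/-- The set of all MIRs of `K`. -/
def MIRs (K : PB) (R : Occurrence → ℕ) : Set Rel := {r | IsMIR K R r}

/-- The set of all C-MCRs of `K`: relations `θ ⊆ ∼_c^K` with `∼_c^K ∖ θ` an MCR. -/
def CMCRs (K : PB) (R : Occurrence → ℕ) : Set Rel :=
  {θ | θ ⊆ sameVarRel K ∧ IsMCR K R (sameVarRel K \ θ)}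

/-- `ρ` is a `∼`-renaming for the equivalence relation `r` on `Occ(K)`:
it assigns a distinct variable to each equivalence class (so it is constant on
classes and distinguishes distinct classes), and any class containing all the
occurrences of a variable `p` is mapped to `p` itself. -/
def IsClassRenaming (K : PB) (r : Rel) (ρ : Occurrence → ℕ) : Prop :=
  (∀ o o', IsOcc K o → IsOcc K o' → (ρ o = ρ o' ↔ (o, o') ∈ r)) ∧
    (∀ o p, IsOccVar K o p → (∀ o', IsOccVar K o' p → (o, o') ∈ r) → ρ o = p)

/-- `σ` encodes a tuple `(q₁,…,q_m) ∈ P(ρ_∼, S)` where `S = (p₁,…,p_m)`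
enumerates `var(K) ∩ var(φ)`: it maps each shared variable `p` to a member of
`⌈ρ⌉(p)` and is the identity elsewhere. -/
def IsTupleChoice (K : PB) (φ : Form) (ρ : Occurrence → ℕ) (σ : ℕ → ℕ) : Prop :=
  (∀ p, p ∈ varsPB K → p ∈ vars φ → ∃ o, IsOccVar K o p ∧ σ p = ρ o) ∧
    (∀ p, ¬ (p ∈ varsPB K ∧ p ∈ vars φ) → σ p = p)

/-- Simultaneous substitution of variables by variables. -/
def substV (σ : ℕ → ℕ) : Form → Form
  | .var p => .var (σ p)
  | .neg φ => .neg (substV σ φ)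
  | .conj φ ψ => .conj (substV σ φ) (substV σ ψ)

/-- `ρ_∼(K) ⊢ ψ`. -/
def rhoEntails (K : PB) (ρ : Occurrence → ℕ) (ψ : Form) : Prop :=
  ∀ w : ℕ → Bool, (∀ φ ∈ K, eval w (renameForm ρ φ) = true) → eval w ψ = true

/-- The inference relation `K ⊩₁ φ`. -/
def Inf1 (K : PB) (R : Occurrence → ℕ) (φ : Form) : Prop :=
  ∀ r ρ, IsMCR K R r → IsClassRenaming K r ρ →
    ∃ σ, IsTupleChoice K φ ρ σ ∧ rhoEntails K ρ (substV σ φ)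

/-- The inference relation `K ⊩₂ φ`. -/
def Inf2 (K : PB) (R : Occurrence → ℕ) (φ : Form) : Prop :=
  ∀ r ρ, IsMCR K R r → IsClassRenaming K r ρ →
    ∀ σ, IsTupleChoice K φ ρ σ → rhoEntails K ρ (substV σ φ)

/-- The inference relation `K ⊩₁^B φ`. -/
def Inf1B (K : PB) (R : Occurrence → ℕ) (φ : Form) : Prop :=
  ∀ r ρ, IsBMCR K R r → IsClassRenaming K r ρ →
    ∃ σ, IsTupleChoice K φ ρ σ ∧ rhoEntails K ρ (substV σ φ)

/-- The inference relation `K ⊩₂^B φ`. -/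
def Inf2B (K : PB) (R : Occurrence → ℕ) (φ : Form) : Prop :=
  ∀ r ρ, IsBMCR K R r → IsClassRenaming K r ρ →
    ∀ σ, IsTupleChoice K φ ρ σ → rhoEntails K ρ (substV σ φ)

/-- `μ` is an o-model of `K`: any interpretation `w` with `w (R o) = μ o` for all
occurrences `o` of `K` is a model of `⋀R(K)`. -/
def OModel (K : PB) (R : Occurrence → ℕ) (μ : Occurrence → Bool) : Prop :=
  ∀ w : ℕ → Bool, (∀ o, IsOcc K o → w (R o) = μ o) →
    ∀ φ ∈ K, eval w (renameForm R φ) = true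

/-- `diff_a(μ)`: pairs of occurrences of the same variable on which `μ` differs. -/
def diffA (K : PB) (μ : Occurrence → Bool) : Rel :=
  {q | IsOcc K q.1 ∧ IsOcc K q.2 ∧ sameVar q.1 q.2 ∧ μ q.1 ≠ μ q.2}

/-- `μ` is an a-minimal o-model of `K`. -/
def AMinOModel (K : PB) (R : Occurrence → ℕ) (μ : Occurrence → Bool) : Prop :=
  OModel K R μ ∧ ∀ μ', OModel K R μ' → ¬ diffA K μ' ⊂ diffA K μ

/-- A Boolean interpretation `w` is compatible with an o-interpretation `μ`. -/
def Compatible (K : PB) (μ : Occurrence → Bool) (w : ℕ → Bool) : Prop :=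
  ∀ p ∈ varsPB K, ∃ o, IsOccVar K o p ∧ w p = μ o

/-- The inference relation `K ⊩_{a1} φ`. -/
def InfA1 (K : PB) (R : Occurrence → ℕ) (φ : Form) : Prop :=
  ∀ μ, AMinOModel K R μ → ∃ w, Compatible K μ w ∧ eval w φ = true

/-- The inference relation `K ⊩_{a2} φ`. -/
def InfA2 (K : PB) (R : Occurrence → ℕ) (φ : Form) : Prop :=
  ∀ μ, AMinOModel K R μ → ∀ w, Compatible K μ w → eval w φ = true

/-- LP_m evaluation: an LP_m interpretation assigns a (nonempty) set of truth
values to each variable; it extends to formulas pointwise. -/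
def lpEval (lam : ℕ → Set Bool) : Form → Set Bool
  | .var p => lam p
  | .neg φ => (fun v => !v) '' lpEval lam φ
  | .conj φ ψ => Set.image2 (· && ·) (lpEval lam φ) (lpEval lam ψ)

/-- `lam` is an LP_m interpretation: each variable gets a nonempty set of values. -/
def IsLPInterp (lam : ℕ → Set Bool) : Prop := ∀ p, (lam p).Nonempty

/-- `lam` is an LP_m model of `⋀K`. -/
def LPModelPB (lam : ℕ → Set Bool) (K : PB) : Prop := ∀ φ ∈ K, true ∈ lpEval lam φ

/-- `λ! = {p : λ(p) = {0,1}}`. -/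
def lpBang (lam : ℕ → Set Bool) : Set ℕ := {p | lam p = Set.univ}

/-- `lam` is a minimal LP_m model of `⋀K`. -/
def MinLPModelPB (K : PB) (lam : ℕ → Set Bool) : Prop :=
  IsLPInterp lam ∧ LPModelPB lam K ∧
    ∀ lam', IsLPInterp lam' → LPModelPB lam' K → ¬ lpBang lam' ⊂ lpBang lam

/-- `K ⊢_{LPm} φ`. -/
def LPmEntails (K : PB) (φ : Form) : Prop :=
  ∀ lam, MinLPModelPB K lam → true ∈ lpEval lam φ

/-- Replace the subformula occurrence of `φ` addressed by the path `l` by `ψ`. -/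
def replaceAt : Form → List Step → Form → Form
  | _, [], ψ => ψ
  | .neg φ, .neg :: l, ψ => .neg (replaceAt φ l ψ)
  | .conj φ χ, .left :: l, ψ => .conj (replaceAt φ l ψ) χ
  | .conj φ χ, .right :: l, ψ => .conj φ (replaceAt χ l ψ)
  | φ, _, _ => φ

/-- The equivalence relation `∼_λ` induced on `Occ(K)` by an LP_m interpretation:
its classes are `Occ(p,K)` for `|λ(p)| = 1` and `PosOcc(p,K)`, `NegOcc(p,K)` for
`λ(p) = {0,1}`. -/
def lamRel (K : PB) (lam : ℕ → Set Bool) : Rel :=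
  {q | ∃ p pol pol', IsOccOf K q.1 p pol ∧ IsOccOf K q.2 p pol' ∧
    (lam p = Set.univ → pol = pol')}

open scoped Classical in
/-- The o-interpretation `μ_λ^K` associated with an LP_m interpretation `λ`. -/
noncomputable def muOf (lam : ℕ → Set Bool) (o : Occurrence) : Bool :=
  match occAt o.1 o.2 true with
  | some (p, pol) =>
      if lam p = ({false} : Set Bool) then false
      else if lam p = ({true} : Set Bool) then true
      else pol
  | none => false

end Occ

/-! Identify the occurrences of each variable inside the formulas of `M`, and nothing else.
This relation is compliant and inconsistent, since a model of it yields a model of `M`; by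
finiteness of `Occ(K)` it contains an MIR `r`. Distinct related occurrences lie in `M`, so
`form_mir(r) ⊆ M`. Conversely, if all occurrences of some `φ ∈ M` were isolated in `r`, a model
of `M ∖ {φ}` on the occurrences in `M ∖ {φ}`, together with values making every other formula
true on its own (its occurrences carry pairwise distinct variables), would satisfy `r`. -/

namespace Occ

def evalOcc (g : List Step → Bool) : Form → Bool
  | .var _ => g []
  | .neg φ => !(evalOcc (fun l => g (.neg :: l)) φ)
  | .conj φ ψ => evalOcc (fun l => g (.left :: l)) φ && evalOcc (fun l => g (.right :: l)) ψ

theorem eval_renameBy (w : ℕ → Bool) (f : List Step → ℕ) (φ : Form) :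
    eval w (renameBy f φ) = evalOcc (fun l => w (f l)) φ := by
  induction φ generalizing f with
  | var => rfl
  | neg φ ih => simp only [renameBy, eval, evalOcc, ih]
  | conj φ ψ ihφ ihψ => simp only [renameBy, eval, evalOcc, ihφ, ihψ]

theorem evalOcc_congr {φ : Form} {pol : Bool} {g g' : List Step → Bool}
    (h : ∀ l, (occAt φ l pol).isSome → g l = g' l) : evalOcc g φ = evalOcc g' φ := by
  induction φ generalizing pol g g' with
  | var => exact h [] rfl
  | neg φ ih => simp only [evalOcc, ih fun l hl => h (.neg :: l) hl]
  | conj φ ψ ihφ ihψ =>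
      simp only [evalOcc, ihφ fun l hl => h (.left :: l) hl, ihψ fun l hl => h (.right :: l) hl]

theorem evalOcc_eq_eval {φ : Form} {pol : Bool} {g : List Step → Bool} {v : ℕ → Bool}
    (h : ∀ l p pol', occAt φ l pol = some (p, pol') → g l = v p) : evalOcc g φ = eval v φ := by
  induction φ generalizing pol g with
  | var p => exact h [] p pol rfl
  | neg φ ih => simp only [evalOcc, eval, ih fun l p pol' hl => h (.neg :: l) p pol' hl]
  | conj φ ψ ihφ ihψ =>
      simp only [evalOcc, eval, ihφ fun l p pol' hl => h (.left :: l) p pol' hl,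
        ihψ fun l p pol' hl => h (.right :: l) p pol' hl]

def occWitness : Form → Bool → List Step → Bool
  | .var _, b, _ => b
  | .neg φ, b, .neg :: l => occWitness φ (!b) l
  | .conj φ _, b, .left :: l => occWitness φ b l
  | .conj _ ψ, _, .right :: l => occWitness ψ true l
  | _, _, _ => false

theorem evalOcc_occWitness (φ : Form) (b : Bool) : evalOcc (occWitness φ b) φ = b := by
  induction φ generalizing b with
  | var => rfl
  | neg φ ih => exact (congrArg (!·) (ih (!b))).trans (Bool.not_not b)
  | conj φ ψ ihφ ihψ => exact (congrArg₂ (· && ·) (ihφ b) (ihψ true)).trans (Bool.and_true b)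

theorem finite_setOf_occAt_isSome (φ : Form) (pol : Bool) :
    {l | (occAt φ l pol).isSome}.Finite := by
  induction φ generalizing pol with
  | var =>
      refine (Set.finite_singleton []).subset ?_
      rintro (_ | ⟨s, l⟩) h <;> simp_all [occAt]
  | neg φ ih =>
      refine ((ih (!pol)).image (Step.neg :: ·)).subset ?_
      rintro (_ | ⟨_ | _ | _, l⟩) h <;> simp_all [occAt]
  | conj φ ψ ihφ ihψ =>
      refine (((ihφ pol).image (Step.left :: ·)).union ((ihψ pol).image (Step.right :: ·))).subset ?_
      rintro (_ | ⟨_ | _ | _, l⟩) h <;> simp_all [occAt]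

theorem finite_setOf_isOcc (K : PB) : {o | IsOcc K o}.Finite := by
  refine (K.finite_toSet.prod (K.finite_toSet.biUnion
    fun φ _ => finite_setOf_occAt_isSome φ true)).subset ?_
  rintro ⟨φ, l⟩ ⟨hφ, p, pol, h⟩
  exact ⟨hφ, Set.mem_biUnion hφ (by simp [h])⟩

/-- The variable of an occurrence; `0` if `o` is not an occurrence. -/
noncomputable def varOf (o : Occurrence) : ℕ := ((occAt o.1 o.2 true).map Prod.fst).getD 0

theorem varOf_eq {o : Occurrence} {p : ℕ} {pol : Bool} (h : occAt o.1 o.2 true = some (p, pol)) :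
    varOf o = p := by
  simp [varOf, h]

theorem sameVar.varOf_eq {o o' : Occurrence} (h : sameVar o o') : varOf o = varOf o' := by
  obtain ⟨p, pol, pol', h, h'⟩ := h
  rw [Occ.varOf_eq h, Occ.varOf_eq h']

theorem sameVar_refl {K : PB} {o : Occurrence} (h : IsOcc K o) : sameVar o o := by
  obtain ⟨_, p, pol, h⟩ := h
  exact ⟨p, pol, pol, h, h⟩

theorem sameVar.symm {o o' : Occurrence} (h : sameVar o o') : sameVar o' o := by
  obtain ⟨p, pol, pol', h, h'⟩ := h
  exact ⟨p, pol', pol, h', h⟩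

theorem sameVar.trans {a b c : Occurrence} (hab : sameVar a b) (hbc : sameVar b c) :
    sameVar a c := by
  obtain ⟨p, pol₁, pol₂, ha, hb⟩ := hab
  obtain ⟨q, pol₃, pol₄, hb', hc⟩ := hbc
  obtain ⟨rfl, -⟩ : p = q ∧ pol₂ = pol₃ := by simpa [hb] using hb'
  exact ⟨p, pol₁, pol₄, ha, hc⟩

theorem exists_isMIR_subset {K : PB} {R : Occurrence → ℕ} {r₀ : Rel} (he : IsEquivOn K r₀)
    (hc : Compliant r₀) (hi : ¬ RelConsistent K R r₀) : ∃ r ⊆ r₀, IsMIR K R r := by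
  have hfin : {r : Rel | IsEquivOn K r ∧ Compliant r ∧ ¬ RelConsistent K R r}.Finite :=
    ((finite_setOf_isOcc K).prod (finite_setOf_isOcc K)).finite_subsets.subset
      fun r hr q hq => hr.1.dom q hq
  obtain ⟨r, hle, ⟨he, hc, hi⟩, hmin⟩ := hfin.exists_le_minimal ⟨he, hc, hi⟩
  exact ⟨r, hle, he, hc, hi, fun r' he' hc' hi' hlt => hlt.2 (hmin ⟨he', hc', hi'⟩ hlt.1)⟩

theorem relConsistent_of_oModel {K : PB} {R : Occurrence → ℕ} {μ : Occurrence → Bool} {r : Rel}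
    (hR : Set.InjOn R {o | IsOcc K o}) (hμ : OModel K R μ)
    (hr : ∀ q ∈ r, IsOcc K q.1 ∧ IsOcc K q.2) (hμr : ∀ q ∈ r, μ q.1 = μ q.2) : RelConsistent K R r := by
  have : Nonempty Occurrence := ⟨(.var 0, [])⟩
  have hw : ∀ o, IsOcc K o → μ (Function.invFunOn R {o | IsOcc K o} (R o)) = μ o :=
    fun o ho => congrArg μ (hR.leftInvOn_invFunOn ho)
  refine ⟨μ ∘ Function.invFunOn R {o | IsOcc K o}, hμ _ hw, fun q hq => ?_⟩
  obtain ⟨h₁, h₂⟩ := hr q hq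
  simp only [Function.comp_apply, hw _ h₁, hw _ h₂, hμr q hq]

theorem oModel_of_evalOcc {K : PB} {R : Occurrence → ℕ} {μ : Occurrence → Bool}
    (h : ∀ φ ∈ K, evalOcc (fun l => μ (φ, l)) φ = true) : OModel K R μ := by
  intro w hw φ hφ
  rw [renameForm, eval_renameBy, ← h φ hφ]
  refine evalOcc_congr (pol := true) fun l hl => ?_
  obtain ⟨⟨p, pol⟩, h⟩ := Option.isSome_iff_exists.1 hl
  exact hw (φ, l) ⟨hφ, p, pol, h⟩

def sameVarRelIn (K M : PB) : Rel :=
  {q | IsOcc K q.1 ∧ IsOcc K q.2 ∧ (q.1 = q.2 ∨ (q.1.1 ∈ M ∧ q.2.1 ∈ M ∧ sameVar q.1 q.2))}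

theorem isEquivOn_sameVarRelIn (K M : PB) : IsEquivOn K (sameVarRelIn K M) where
  dom _ hq := ⟨hq.1, hq.2.1⟩
  refl _ ho := ⟨ho, ho, Or.inl rfl⟩
  symm := by
    rintro q ⟨h₁, h₂, heq | ⟨m₁, m₂, hsv⟩⟩
    · exact ⟨h₂, h₁, Or.inl heq.symm⟩
    · exact ⟨h₂, h₁, Or.inr ⟨m₂, m₁, hsv.symm⟩⟩
  trans a b c hab hbc := by
    simp only [sameVarRelIn, Set.mem_ofPred_eq] at hab hbc ⊢
    obtain ⟨ha, -, rfl | ⟨ma, mb, hab⟩⟩ := hab <;> obtain ⟨-, hc, hbc⟩ := hbc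
    · exact ⟨ha, hc, hbc⟩
    · rcases hbc with rfl | ⟨-, mc, hbc⟩
      · exact ⟨ha, hc, Or.inr ⟨ma, mb, hab⟩⟩
      · exact ⟨ha, hc, Or.inr ⟨ma, mc, hab.trans hbc⟩⟩

theorem compliant_sameVarRelIn (K M : PB) : Compliant (sameVarRelIn K M) := by
  rintro q ⟨h₁, -, heq | ⟨-, -, hsv⟩⟩
  · exact heq ▸ sameVar_refl h₁
  · exact hsv

theorem fst_mem_of_mem_sameVarRelIn {K M : PB} {q : Occurrence × Occurrence}
    (hq : q ∈ sameVarRelIn K M) (hne : q.1 ≠ q.2) : q.1.1 ∈ M := by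
  obtain ⟨-, -, heq | ⟨hM, -⟩⟩ := hq
  · exact absurd heq hne
  · exact hM

theorem not_relConsistent_sameVarRelIn {K M : PB} {R : Occurrence → ℕ} (hMK : M ⊆ K)
    (hM : ¬ ConsistentPB M) : ¬ RelConsistent K R (sameVarRelIn K M) := by
  classical
  rintro ⟨w, hwK, hwr⟩
  let v : ℕ → Bool := fun p => if h : ∃ o, IsOccVar M o p then w (R h.choose) else false
  refine hM ⟨v, fun φ hφ => ?_⟩
  rw [← hwK φ (hMK hφ), renameForm, eval_renameBy]
  refine (evalOcc_eq_eval (pol := true) fun l p pol hl => ?_).symm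
  have hex : ∃ o, IsOccVar M o p := ⟨(φ, l), pol, hφ, hl⟩
  obtain ⟨pol', hoM, ho⟩ := hex.choose_spec
  simp only [v, dif_pos hex]
  exact hwr ((φ, l), hex.choose) ⟨⟨hMK hφ, p, pol, hl⟩, ⟨hMK hoM, p, pol', ho⟩,
    Or.inr ⟨hφ, hoM, p, pol, pol', hl, ho⟩⟩

theorem relConsistent_of_isolated {K M : PB} {R : Occurrence → ℕ} {r : Rel} {φ₀ : Form}
    (hR : Set.InjOn R {o | IsOcc K o}) (hr : IsEquivOn K r) (hrM : r ⊆ sameVarRelIn K M)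
    (hφ₀ : ∀ l o', ((φ₀, l), o') ∈ r → o' = (φ₀, l)) (hM : ConsistentPB (M.erase φ₀)) :
    RelConsistent K R r := by
  classical
  obtain ⟨v, hv⟩ := hM
  -- occurrences in `M ∖ {φ₀}` follow `v`, the others make their own formula true
  let μ : Occurrence → Bool := fun o =>
    if o.1 ∈ M.erase φ₀ then v (varOf o) else occWitness o.1 true o.2
  have hμ : OModel K R μ := oModel_of_evalOcc fun φ _ => by
    by_cases hφ : φ ∈ M.erase φ₀
    · simp only [μ, if_pos hφ]
      exact (evalOcc_eq_eval (pol := true) fun l p pol hl => by rw [varOf_eq hl]).trans (hv φ hφ)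
    · simp only [μ, if_neg hφ]
      exact evalOcc_occWitness φ true
  have hfree : ∀ a b, (a, b) ∈ r → a.1 = φ₀ → b = a := by
    rintro ⟨φ, l⟩ b hab rfl
    exact hφ₀ l b hab
  refine relConsistent_of_oModel hR hμ hr.dom fun q hq => ?_
  rcases eq_or_ne q.1 q.2 with heq | hne
  · rw [heq]
  obtain ⟨-, -, heq | ⟨h₁, h₂, hsv⟩⟩ := hrM hq
  · exact absurd heq hne
  have hq₁ : q.1.1 ∈ M.erase φ₀ :=
    Finset.mem_erase.2 ⟨fun h => hne (hfree _ _ hq h).symm, h₁⟩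
  have hq₂ : q.2.1 ∈ M.erase φ₀ :=
    Finset.mem_erase.2 ⟨fun h => hne (hfree _ _ (hr.symm q hq) h), h₂⟩
  simp only [μ, if_pos hq₁, if_pos hq₂, hsv.varOf_eq]

end Occ

/-- Proposition 4: every minimal inconsistent subset `M` of `K` is
an O-MIS of `K`: there is an MIR `r` of `K` with `M = form_mir(r)` (the set of
formulas of `K` containing an occurrence lying in a class of `r` of size ≥ 2). -/
theorem MIS_is_OMIS (K M : Occ.PB)
    (R : Occ.Occurrence → ℕ) (hR : Occ.IsCRenaming K R)
    (hMK : M ⊆ K) (hMinc : ¬ Occ.ConsistentPB M)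
    (hMmin : ∀ φ ∈ M, Occ.ConsistentPB (M.erase φ)) :
    ∃ r : Occ.Rel, Occ.IsMIR K R r ∧
      ∀ φ : Occ.Form, φ ∈ M ↔ (φ ∈ K ∧
        ∃ (l : List Occ.Step) (o' : Occ.Occurrence),
          ((φ, l), o') ∈ r ∧ o' ≠ (φ, l)) := by
  obtain ⟨r, hrM, hr⟩ := Occ.exists_isMIR_subset (Occ.isEquivOn_sameVarRelIn K M)
    (Occ.compliant_sameVarRelIn K M) (Occ.not_relConsistent_sameVarRelIn (R := R) hMK hMinc)
  refine ⟨r, hr, fun φ => ⟨fun hφ => ⟨hMK hφ, ?_⟩, fun ⟨_, _, _, ho', hne⟩ => ?_⟩⟩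
  · by_contra! hisolated
    exact hr.2.2.1 (Occ.relConsistent_of_isolated (fun o ho o' ho' => hR.inj o o' ho ho') hr.1 hrM
      hisolated (hMmin φ hφ))
  · exact Occ.fst_mem_of_mem_sameVarRelIn (hrM ho') hne.symm
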